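/- Let a, b, c, d ∈ R = ℂ[s,t,u] be homogeneous polynomials of degree n ≥ 1, and assume a, b, c, d have no common zeros on ℙ², i.e., their only common zero in ℂ³ is the origin. Then the syzygy module Syz(a,b,c,d) = {(A,B,C,D) ∈ R⁴ : Aa + Bb + Cc + Dd = 0} is not a free R-module. -/

import Mathlib

open MvPolynomial

noncomputable section SyzygyAux

local notation "RR" => MvPolynomial (Fin 3) ℂ

lemma syz_X_dvd_iff_coeff (i : Fin 3) (x : RR) :
    X i ∣ x ↔ ∀ m : Fin 3 →₀ ℕ, m i = 0 → coeff m x = 0 := by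
  rw [X_dvd_iff_modMonomial_eq_zero]
  constructor
  · intro h m hm
    have h2 : ¬ Finsupp.single i 1 ≤ m := by
      simp [Finsupp.single_le_iff, hm]
    have := congrArg (coeff m) h
    rwa [coeff_modMonomial_of_not_le x h2, coeff_zero] at this
  · intro h
    apply MvPolynomial.ext
    intro m
    rw [coeff_zero]
    by_cases hle : Finsupp.single i 1 ≤ m
    · exact coeff_modMonomial_of_le x hle
    · rw [coeff_modMonomial_of_not_le x hle]
      refine h m ?_
      by_contra hm
      exact hle (Finsupp.single_le_iff.2 (Nat.one_le_iff_ne_zero.2 hm))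

lemma syz_coeff_X_mul_zero {i : Fin 3} {x : RR} {m : Fin 3 →₀ ℕ} (hm : m i = 0) :
    coeff m (X i * x) = 0 :=
  (syz_X_dvd_iff_coeff i (X i * x)).1 (dvd_mul_right _ _) m hm

lemma syz_dvd_of_cross {i j : Fin 3} (hij : j ≠ i) {A B : RR}
    (h : X j * A = X i * B) : X i ∣ A := by
  rw [syz_X_dvd_iff_coeff]
  intro m hm
  have e1 : coeff (Finsupp.single j 1 + m) (X j * A) = coeff m A := coeff_X_mul _ _ _
  have e2 : coeff (Finsupp.single j 1 + m) (X i * B) = 0 := by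
    refine syz_coeff_X_mul_zero ?_
    simp [Finsupp.single_apply, hij, hm]
  rw [← e1, h, e2]

lemma syz_koszul1 (p q r : RR) (h : X 0 * p + X 1 * q + X 2 * r = 0) :
    ∃ e f g : RR, p = X 1 * e + X 2 * f ∧ q = -(X 0 * e) + X 2 * g ∧
      r = -(X 0 * f) - X 1 * g := by
  classical
  set q₁ := q.divMonomial (Finsupp.single 0 1) with hq₁def
  set q₀ := q.modMonomial (Finsupp.single 0 1) with hq₀def
  set r₁ := r.divMonomial (Finsupp.single 0 1) with hr₁def
  set r₀ := r.modMonomial (Finsupp.single 0 1) with hr₀def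
  have hq : X 0 * q₁ + q₀ = q := divMonomial_add_modMonomial_single q 0
  have hr : X 0 * r₁ + r₀ = r := divMonomial_add_modMonomial_single r 0
  have hcq₀ : ∀ m : Fin 3 →₀ ℕ, m 0 ≠ 0 → coeff m q₀ = 0 := fun m hm =>
    coeff_modMonomial_of_le q (Finsupp.single_le_iff.2 (Nat.one_le_iff_ne_zero.2 hm))
  have hcr₀ : ∀ m : Fin 3 →₀ ℕ, m 0 ≠ 0 → coeff m r₀ = 0 := fun m hm =>
    coeff_modMonomial_of_le r (Finsupp.single_le_iff.2 (Nat.one_le_iff_ne_zero.2 hm))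
  have hAB : X 0 * (p + X 1 * q₁ + X 2 * r₁) + (X 1 * q₀ + X 2 * r₀) = 0 := by
    linear_combination h + X 1 * hq + X 2 * hr
  have hB : X 1 * q₀ + X 2 * r₀ = 0 := by
    apply MvPolynomial.ext
    intro m
    rw [coeff_zero]
    by_cases hm : m 0 = 0
    · have := congrArg (coeff m) hAB
      rwa [coeff_add, syz_coeff_X_mul_zero hm, coeff_zero, zero_add] at this
    · rw [coeff_add, coeff_X_mul', coeff_X_mul']
      have h1 : (m - Finsupp.single 1 1 : Fin 3 →₀ ℕ) 0 ≠ 0 := by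
        simpa [Finsupp.tsub_apply, Finsupp.single_apply] using hm
      have h2 : (m - Finsupp.single 2 1 : Fin 3 →₀ ℕ) 0 ≠ 0 := by
        simpa [Finsupp.tsub_apply, Finsupp.single_apply] using hm
      split_ifs <;> simp [hcq₀ _ h1, hcr₀ _ h2]
  have hA : p + X 1 * q₁ + X 2 * r₁ = 0 := by
    have h0 : X 0 * (p + X 1 * q₁ + X 2 * r₁) = 0 := by linear_combination hAB - hB
    rcases mul_eq_zero.1 h0 with h' | h'
    · exact absurd h' (X_ne_zero 0)
    · exact h'
  have hdvd : X 2 ∣ q₀ := by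
    rw [syz_X_dvd_iff_coeff]
    intro m hm
    have e1 : coeff (Finsupp.single 1 1 + m) (X 1 * q₀) = coeff m q₀ := coeff_X_mul _ _ _
    have e2 : coeff (Finsupp.single 1 1 + m) (X 2 * r₀) = 0 := by
      refine syz_coeff_X_mul_zero ?_
      simp [Finsupp.single_apply, hm]
    have e3 := congrArg (coeff (Finsupp.single 1 1 + m)) hB
    rwa [coeff_add, e1, e2, add_zero, coeff_zero] at e3
  obtain ⟨g, hg⟩ := hdvd
  have hr₀' : r₀ = -(X 1 * g) := by
    have h2 : X 2 * (r₀ + X 1 * g) = 0 := by linear_combination hB - X 1 * hg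
    rcases mul_eq_zero.1 h2 with h' | h'
    · exact absurd h' (X_ne_zero 2)
    · linear_combination h'
  refine ⟨-q₁, -r₁, g, by linear_combination hA, by linear_combination hg - hq,
    by linear_combination hr₀' - hr⟩

end SyzygyAux

/-- The syzygy module `Syz(a,b,c,d) = {(A,B,C,D) ∈ R⁴ : Aa + Bb + Cc + Dd = 0}`
as an `R`-submodule of `R⁴`, `R = ℂ[s,t,u]`. -/
noncomputable def syzygyModule (a b c d : MvPolynomial (Fin 3) ℂ) :
    Submodule (MvPolynomial (Fin 3) ℂ) (Fin 4 → MvPolynomial (Fin 3) ℂ) where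
  carrier := {A | A 0 * a + A 1 * b + A 2 * c + A 3 * d = 0}
  add_mem' := by
    intro A B hA hB
    simp only [Set.mem_setOf_eq, Pi.add_apply] at *
    linear_combination hA + hB
  zero_mem' := by simp
  smul_mem' := by
    intro r A hA
    simp only [Set.mem_setOf_eq, Pi.smul_apply, smul_eq_mul] at *
    linear_combination r * hA

noncomputable section SyzygyAux2

local notation "RR" => MvPolynomial (Fin 3) ℂ

lemma mem_syzygyModule_iff {a b c d : RR} {x : Fin 4 → RR} :
    x ∈ syzygyModule a b c d ↔ x 0 * a + x 1 * b + x 2 * c + x 3 * d = 0 :=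
  Iff.rfl

set_option maxHeartbeats 800000 in
lemma syz_koszulM {M : Type} [AddCommGroup M] [Module RR M]
    (hfree : Module.Free RR M) (w₁ w₂ w₃ : M)
    (h : (X 0 : RR) • w₁ + (X 1 : RR) • w₂ + (X 2 : RR) • w₃ = 0) :
    ∃ z₁ z₂ z₃ : M,
      w₁ = (X 1 : RR) • z₁ + (X 2 : RR) • z₂ ∧
      w₂ = -((X 0 : RR) • z₁) + (X 2 : RR) • z₃ ∧
      w₃ = -((X 0 : RR) • z₂) - (X 1 : RR) • z₃ := by
  classical
  haveI := hfree
  let ι := Module.Free.ChooseBasisIndex RR M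
  let B : Module.Basis ι RR M := Module.Free.chooseBasis RR M
  set P := B.repr w₁ with hP
  set Q := B.repr w₂ with hQ
  set T := B.repr w₃ with hT
  have hcoord : ∀ i, X 0 * P i + X 1 * Q i + X 2 * T i = 0 := by
    intro i
    have h2 := congrArg (fun v => B.repr v i) h
    simpa [map_add, map_smul, Finsupp.add_apply, Finsupp.smul_apply, smul_eq_mul]
      using h2
  choose e f g he hq ht using fun i => syz_koszul1 (P i) (Q i) (T i) (hcoord i)
  set S : Finset ι := (P.support ∪ Q.support) ∪ T.support with hS
  have hmkaux : ∀ φ : ι → RR,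
      ∀ i : ι, (fun i => if i ∈ S then φ i else 0) i ≠ 0 → i ∈ ↑S := by
    intro φ i hi
    by_contra hiS
    simp [hiS] at hi
  refine ⟨B.repr.symm (Finsupp.onFinset S _ (hmkaux e)),
          B.repr.symm (Finsupp.onFinset S _ (hmkaux f)),
          B.repr.symm (Finsupp.onFinset S _ (hmkaux g)), ?_, ?_, ?_⟩
  · apply B.repr.injective
    rw [map_add, map_smul, map_smul, LinearEquiv.apply_symm_apply,
      LinearEquiv.apply_symm_apply]
    refine Finsupp.ext fun i => ?_
    simp only [Finsupp.add_apply, Finsupp.smul_apply, smul_eq_mul,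
      Finsupp.onFinset_apply]
    by_cases hi : i ∈ S
    · rw [if_pos hi, if_pos hi]
      exact he i
    · have hPi : P i = 0 := by
        rw [← Finsupp.notMem_support_iff]
        intro hmem
        exact hi (by simp [hS, hmem])
      rw [if_neg hi, if_neg hi, ← hP, hPi]
      ring
  · apply B.repr.injective
    rw [map_add, map_neg, map_smul, map_smul, LinearEquiv.apply_symm_apply,
      LinearEquiv.apply_symm_apply]
    refine Finsupp.ext fun i => ?_
    simp only [Finsupp.add_apply, Finsupp.neg_apply, Finsupp.smul_apply, smul_eq_mul,
      Finsupp.onFinset_apply]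
    by_cases hi : i ∈ S
    · rw [if_pos hi, if_pos hi]
      exact hq i
    · have hQi : Q i = 0 := by
        rw [← Finsupp.notMem_support_iff]
        intro hmem
        exact hi (by simp [hS, hmem])
      rw [if_neg hi, if_neg hi, ← hQ, hQi]
      ring
  · apply B.repr.injective
    rw [map_sub, map_neg, map_smul, map_smul, LinearEquiv.apply_symm_apply,
      LinearEquiv.apply_symm_apply]
    refine Finsupp.ext fun i => ?_
    simp only [Finsupp.sub_apply, Finsupp.neg_apply, Finsupp.smul_apply, smul_eq_mul,
      Finsupp.onFinset_apply]
    by_cases hi : i ∈ S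
    · rw [if_pos hi, if_pos hi]
      linear_combination ht i
    · have hTi : T i = 0 := by
        rw [← Finsupp.notMem_support_iff]
        intro hmem
        exact hi (by simp [hS, hmem])
      rw [if_neg hi, if_neg hi, ← hT, hTi]
      ring

lemma syz_step {a b c d : RR} (hfree : Module.Free RR (syzygyModule a b c d))
    (x : RR)
    (h1 : ∃ v : Fin 4 → RR, v 0 * a + v 1 * b + v 2 * c + v 3 * d = X 0 * x)
    (h2 : ∃ v : Fin 4 → RR, v 0 * a + v 1 * b + v 2 * c + v 3 * d = X 1 * x)
    (h3 : ∃ v : Fin 4 → RR, v 0 * a + v 1 * b + v 2 * c + v 3 * d = X 2 * x) :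
    ∃ v : Fin 4 → RR, v 0 * a + v 1 * b + v 2 * c + v 3 * d = x := by
  classical
  obtain ⟨v₁, hv₁⟩ := h1
  obtain ⟨v₂, hv₂⟩ := h2
  obtain ⟨v₃, hv₃⟩ := h3
  set W₁ : syzygyModule a b c d :=
    ⟨(X 2 : RR) • v₂ - (X 1 : RR) • v₃, by
      show _ * a + _ * b + _ * c + _ * d = 0
      simp only [Pi.sub_apply, Pi.smul_apply, smul_eq_mul]
      linear_combination X 2 * hv₂ - X 1 * hv₃⟩ with hW₁
  set W₂ : syzygyModule a b c d :=
    ⟨(X 0 : RR) • v₃ - (X 2 : RR) • v₁, by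
      show _ * a + _ * b + _ * c + _ * d = 0
      simp only [Pi.sub_apply, Pi.smul_apply, smul_eq_mul]
      linear_combination X 0 * hv₃ - X 2 * hv₁⟩ with hW₂
  set W₃ : syzygyModule a b c d :=
    ⟨(X 1 : RR) • v₁ - (X 0 : RR) • v₂, by
      show _ * a + _ * b + _ * c + _ * d = 0
      simp only [Pi.sub_apply, Pi.smul_apply, smul_eq_mul]
      linear_combination X 1 * hv₁ - X 0 * hv₂⟩ with hW₃
  have hrel : (X 0 : RR) • W₁ + (X 1 : RR) • W₂ + (X 2 : RR) • W₃ = 0 := by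
    apply Subtype.ext
    show (X 0 : RR) • ((X 2 : RR) • v₂ - (X 1 : RR) • v₃)
        + (X 1 : RR) • ((X 0 : RR) • v₃ - (X 2 : RR) • v₁)
        + (X 2 : RR) • ((X 1 : RR) • v₁ - (X 0 : RR) • v₂) = 0
    funext j
    simp only [Pi.add_apply, Pi.sub_apply, Pi.smul_apply, smul_eq_mul, Pi.zero_apply]
    ring
  obtain ⟨z₁, z₂, z₃, hz₁, hz₂, hz₃⟩ := syz_koszulM hfree W₁ W₂ W₃ hrel
  have hz₃' : (X 1 : RR) • v₁ - (X 0 : RR) • v₂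
      = -((X 0 : RR) • (z₂ : Fin 4 → RR)) - (X 1 : RR) • (z₃ : Fin 4 → RR) := by
    have := congrArg (Subtype.val) hz₃
    simpa using this
  have hdvd : ∀ j : Fin 4, (X 0 : RR) ∣ (v₁ j + (z₃ : Fin 4 → RR) j) := by
    intro j
    refine syz_dvd_of_cross (i := 0) (j := 1) (by decide)
      (B := v₂ j - (z₂ : Fin 4 → RR) j) ?_
    have := congrArg (fun w => w j) hz₃'
    simp only [Pi.sub_apply, Pi.neg_apply, Pi.smul_apply, smul_eq_mul] at this
    linear_combination this
  choose hh hhp using hdvd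
  have hz₃mem := z₃.2
  rw [mem_syzygyModule_iff] at hz₃mem
  refine ⟨hh, ?_⟩
  have hmain : X 0 * (hh 0 * a + hh 1 * b + hh 2 * c + hh 3 * d) = X 0 * x := by
    linear_combination hv₁ + hz₃mem - a * hhp 0 - b * hhp 1 - c * hhp 2 - d * hhp 3
  exact mul_left_cancel₀ (X_ne_zero 0) hmain

lemma syz_mem_span_iff (a b c d : RR) (y : RR) :
    y ∈ Ideal.span {a, b, c, d} ↔
      ∃ v : Fin 4 → RR, v 0 * a + v 1 * b + v 2 * c + v 3 * d = y := by
  constructor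
  · intro hy
    have hset : ({a, b, c, d} : Set RR) = insert a (insert b (insert c {d})) := rfl
    rw [hset, Ideal.mem_span_insert] at hy
    obtain ⟨r₁, y₁, hy₁, rfl⟩ := hy
    rw [Ideal.mem_span_insert] at hy₁
    obtain ⟨r₂, y₂, hy₂, rfl⟩ := hy₁
    rw [Ideal.mem_span_insert] at hy₂
    obtain ⟨r₃, y₃, hy₃, rfl⟩ := hy₂
    rw [Ideal.mem_span_singleton'] at hy₃
    obtain ⟨r₄, rfl⟩ := hy₃
    refine ⟨![r₁, r₂, r₃, r₄], ?_⟩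
    simp only [Matrix.cons_val_zero, Matrix.cons_val_one, Matrix.head_cons,
      Matrix.cons_val_two, Matrix.tail_cons, Matrix.cons_val_three]
    ring
  · rintro ⟨v, rfl⟩
    have ha : a ∈ Ideal.span ({a, b, c, d} : Set RR) := Ideal.subset_span (by simp)
    have hb : b ∈ Ideal.span ({a, b, c, d} : Set RR) := Ideal.subset_span (by simp)
    have hc : c ∈ Ideal.span ({a, b, c, d} : Set RR) := Ideal.subset_span (by simp)
    have hd : d ∈ Ideal.span ({a, b, c, d} : Set RR) := Ideal.subset_span (by simp)
    exact add_mem (add_mem (add_mem (Ideal.mul_mem_left _ _ ha)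
      (Ideal.mul_mem_left _ _ hb)) (Ideal.mul_mem_left _ _ hc))
      (Ideal.mul_mem_left _ _ hd)

/-- If `a, b, c, d ∈ ℂ[s,t,u]` are homogeneous of degree `n ≥ 1`
with no common zeros on `ℙ²`, then `Syz(a,b,c,d)` is not a free module over
`ℂ[s,t,u]`. -/
theorem syzygy_module_not_free (n : ℕ) (hn : 1 ≤ n)
    (a b c d : MvPolynomial (Fin 3) ℂ)
    (ha : a.IsHomogeneous n) (hb : b.IsHomogeneous n)
    (hc : c.IsHomogeneous n) (hd : d.IsHomogeneous n)
    (hnobp : ∀ p : Fin 3 → ℂ,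
      eval p a = 0 → eval p b = 0 → eval p c = 0 → eval p d = 0 → p = 0) :
    ¬ Module.Free (MvPolynomial (Fin 3) ℂ) (syzygyModule a b c d) := by
  intro hfree
  classical
  set I : Ideal RR := Ideal.span {a, b, c, d} with hI
  -- the socle-killing property coming from freeness
  have key : ∀ x : RR, X 0 * x ∈ I → X 1 * x ∈ I → X 2 * x ∈ I → x ∈ I := by
    intro x k0 k1 k2
    rw [syz_mem_span_iff] at k0 k1 k2 ⊢
    exact syz_step hfree x k0 k1 k2
  -- the variables are in the radical of I
  have haI : a ∈ I := Ideal.subset_span (by simp)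
  have hbI : b ∈ I := Ideal.subset_span (by simp)
  have hcI : c ∈ I := Ideal.subset_span (by simp)
  have hdI : d ∈ I := Ideal.subset_span (by simp)
  have hXrad : ∀ i : Fin 3, (X i : RR) ∈ I.radical := by
    intro i
    rw [← vanishingIdeal_zeroLocus_eq_radical (K := ℂ)]
    rw [mem_vanishingIdeal_iff]
    intro p hp
    rw [mem_zeroLocus_iff] at hp
    have hp0 : p = 0 := hnobp p (hp a haI) (hp b hbI) (hp c hcI) (hp d hdI)
    rw [aeval_X, hp0]
    rfl
  have hmrad : Ideal.span {(X 0 : RR), X 1, X 2} ≤ I.radical := by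
    rw [Ideal.span_le]
    rintro y hy
    simp only [Set.mem_insert_iff, Set.mem_singleton_iff] at hy
    rcases hy with rfl | rfl | rfl
    · exact hXrad 0
    · exact hXrad 1
    · exact hXrad 2
  have hfg : (Ideal.span {(X 0 : RR), X 1, X 2}).FG := ⟨{X 0, X 1, X 2}, by simp⟩
  obtain ⟨N, hN⟩ := Ideal.exists_pow_le_of_le_radical_of_fg hmrad hfg
  have desc : ∀ k : ℕ, Ideal.span {(X 0 : RR), X 1, X 2} ^ (N - k) ≤ I := by
    intro k
    induction k with
    | zero => simpa using hN
    | succ k ih =>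
      rcases le_or_gt N k with hk | hk
      · have : N - (k + 1) = N - k := by omega
        rw [this]
        exact ih
      · intro x hx
        have hexp : N - k = (N - (k + 1)) + 1 := by omega
        have hmul : ∀ i : Fin 3,
            X i * x ∈ Ideal.span {(X 0 : RR), X 1, X 2} ^ (N - k) := by
          intro i
          rw [hexp, pow_succ, mul_comm (X i) x]
          exact Ideal.mul_mem_mul hx (Ideal.subset_span (by fin_cases i <;> simp))
        exact key x (ih (hmul 0)) (ih (hmul 1)) (ih (hmul 2))
  have hone : (1 : RR) ∈ I := by
    have := desc N
    rw [Nat.sub_self, pow_zero, Ideal.one_eq_top] at this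
    exact this Submodule.mem_top
  obtain ⟨v, hv⟩ := (syz_mem_span_iff a b c d 1).1 hone
  -- evaluate at the origin
  have heval : ∀ p : RR, p.IsHomogeneous n → eval (0 : Fin 3 → ℂ) p = 0 := by
    intro p hp
    rw [eval_zero]
    have : Finsupp.degree (0 : Fin 3 →₀ ℕ) ≠ n := by
      rw [map_zero]
      omega
    simpa [constantCoeff_eq] using hp.coeff_eq_zero this
  have := congrArg (eval (0 : Fin 3 → ℂ)) hv
  rw [map_one, map_add, map_add, map_add, map_mul, map_mul, map_mul, map_mul,
    heval a ha, heval b hb, heval c hc, heval d hd] at this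
  simp at this

end SyzygyAux2
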